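/- arXiv:1010.0299 — 2 statements merged into one kernel-verified Lean document; each statement's English description precedes it below -/
import Mathlib

section
/- Under the same hypotheses (p polynomial of degree d ≥ 2 with leading coefficient a_d, L a linearizer with p∘L(z) = L(λz), r > max{R_ε, R_L}), with K_ε = log((1+ε)|a_d|): log M(L, |λ|r) ≤ K_ε + d·log M(L, r). -/
/-!
The functional equation gives `L(λ · S_r) = p(L(S_r))`, and `L(S_r)` lies in the closed disc of
radius `s = M(L, r)`. By the maximum modulus principle `|p|` is bounded on that disc by its maximum
on the circle of radius `s`, which is at most `(1 + ε)|a_d| s^d` because `s > r > R_ε`. Hence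
`M(L, |λ| r) ≤ (1 + ε)|a_d| M(L, r)^d`; taking logarithms gives the claim.
-/

noncomputable def maxMod (L : ℂ → ℂ) (r : ℝ) : ℝ :=
  sSup ((fun z => ‖L z‖) '' Metric.sphere (0:ℂ) r)

open Metric

section MaxMod

variable {f L : ℂ → ℂ} {r : ℝ}

theorem norm_le_maxMod (hL : Continuous L) {z : ℂ} (hz : ‖z‖ = r) : ‖L z‖ ≤ maxMod L r :=
  le_csSup ((isCompact_sphere (0 : ℂ) r).image (continuous_norm.comp hL)).bddAbove
    ⟨z, by simpa using hz, rfl⟩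

theorem maxMod_le {B : ℝ} (hr : 0 ≤ r) (h : ∀ z : ℂ, ‖z‖ = r → ‖L z‖ ≤ B) : maxMod L r ≤ B :=
  csSup_le ((NormedSpace.sphere_nonempty.mpr hr).image _) <| by
    rintro _ ⟨z, hz, rfl⟩
    exact h z (by simpa using hz)

theorem norm_le_maxMod_of_norm_le (hf : Differentiable ℂ f) (hr : 0 < r) {w : ℂ} (hw : ‖w‖ ≤ r) :
    ‖f w‖ ≤ maxMod f r := by
  refine Complex.norm_le_of_forall_mem_frontier_norm_le (isBounded_ball (x := 0) (r := r))
    hf.diffContOnCl (fun u hu => norm_le_maxMod hf.continuous ?_) ?_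
  · simpa [frontier_ball _ hr.ne'] using hu
  · simpa [closure_ball _ hr.ne'] using hw

theorem maxMod_mul_le_maxMod_maxMod (hf : Differentiable ℂ f) (hL : Continuous L) {lam : ℂ}
    (hlam : lam ≠ 0) (hLeq : ∀ z, f (L z) = L (lam * z)) (hr : 0 ≤ r) (hM : 0 < maxMod L r) :
    maxMod L (‖lam‖ * r) ≤ maxMod f (maxMod L r) := by
  refine maxMod_le (by positivity) fun w hw => ?_
  have hz : ‖w / lam‖ = r := by
    rw [norm_div, hw, mul_div_cancel_left₀ r (norm_ne_zero_iff.mpr hlam)]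
  rw [← mul_div_cancel₀ w hlam, ← hLeq]
  exact norm_le_maxMod_of_norm_le hf hM (norm_le_maxMod hL hz)

end MaxMod

theorem linearizer_maxmod_upper_growth_general (p : Polynomial ℂ) (d : ℕ) (lam : ℂ) (hrep : 1 < ‖lam‖)
    (L : ℂ → ℂ) (hL : Differentiable ℂ L)
    (hLeq : ∀ z : ℂ, p.eval (L z) = L (lam * z))
    (ε Rε RL : ℝ) (hRL : 1 ≤ RL)
    (hbound : ∀ z : ℂ, Rε < ‖z‖ →
      (1 - ε) * ‖p.leadingCoeff‖ * ‖z‖ ^ d ≤ ‖p.eval z‖ ∧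
      ‖p.eval z‖ ≤ (1 + ε) * ‖p.leadingCoeff‖ * ‖z‖ ^ d)
    (hML : ∀ s : ℝ, RL ≤ s → s < maxMod L s) :
    ∀ r : ℝ, max Rε RL < r →
      Real.log (maxMod L (‖lam‖ * r)) ≤
        Real.log ((1 + ε) * ‖p.leadingCoeff‖) + d * Real.log (maxMod L r) := by
  intro r hr
  rw [max_lt_iff] at hr
  set C := (1 + ε) * ‖p.leadingCoeff‖
  set s := maxMod L r
  have hrs : r < s := hML r hr.2.le
  have hs : 0 < s := by linarith
  have hlam : lam ≠ 0 := norm_pos_iff.mp (by linarith)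
  have hpos : 0 < maxMod L (‖lam‖ * r) := by
    have := hML (‖lam‖ * r) (by nlinarith)
    nlinarith
  have hp : maxMod (fun w => p.eval w) s ≤ C * s ^ d :=
    maxMod_le hs.le fun u hu => hu ▸ (hbound u (by linarith)).2
  have hkey : maxMod L (‖lam‖ * r) ≤ C * s ^ d :=
    (maxMod_mul_le_maxMod_maxMod p.differentiable hL.continuous hlam hLeq (by linarith) hs).trans hp
  have hC : 0 < C := pos_of_mul_pos_left (hpos.trans_le hkey) (by positivity)
  calc Real.log (maxMod L (‖lam‖ * r))
      ≤ Real.log (C * s ^ d) := Real.log_le_log hpos hkey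
    _ = Real.log C + d * Real.log s := by
      rw [Real.log_mul hC.ne' (by positivity), Real.log_pow]

theorem linearizer_maxmod_upper_growth (p : Polynomial ℂ) (d : ℕ) (hd : 2 ≤ d)
    (hdeg : p.natDegree = d) (z₀ lam : ℂ) (hfix : p.eval z₀ = z₀)
    (hlam : lam = (Polynomial.derivative p).eval z₀) (hrep : 1 < ‖lam‖)
    (L : ℂ → ℂ) (hL : Differentiable ℂ L) (hL0 : L 0 = z₀)
    (hLeq : ∀ z : ℂ, p.eval (L z) = L (lam * z))
    (ε Rε RL : ℝ) (hε : 0 < ε) (hRε : 0 < Rε) (hRL : 1 ≤ RL)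
    (hbound : ∀ z : ℂ, Rε < ‖z‖ →
      (1 - ε) * ‖p.leadingCoeff‖ * ‖z‖ ^ d ≤ ‖p.eval z‖ ∧
      ‖p.eval z‖ ≤ (1 + ε) * ‖p.leadingCoeff‖ * ‖z‖ ^ d)
    (hML : ∀ s : ℝ, RL ≤ s → s < maxMod L s) :
    ∀ r : ℝ, max Rε RL < r →
      Real.log (maxMod L (‖lam‖ * r)) ≤
        Real.log ((1 + ε) * ‖p.leadingCoeff‖) + d * Real.log (maxMod L r) :=
  linearizer_maxmod_upper_growth_general p d lam hrep L hL hLeq ε Rε RL hRL hbound hML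
end

section
/- Let p be a polynomial of degree d ≥ 2 with repelling fixed point z_0 whose Julia set component J_{z_0}(p) is not equal to {z_0}, and let L be a linearizer of p at z_0. Then for R with M(L,r) > r for all r ≥ R, the set A_R(L) = {z : |L^n(z)| ≥ M^n(L,R) for all n ≥ 0} is not a spider's web. Specifically: there is no sequence of bounded simply connected domains G_n containing 0 with G_n ⊂ G_{n+1}, ∪G_n = ℂ, and ∂G_n ⊂ A_R(L). -/
def escapes (p : Polynomial ℂ) : Set ℂ :=
  {z : ℂ | Filter.Tendsto (fun n : ℕ => ‖(fun w => p.eval w)^[n] z‖)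
    Filter.atTop Filter.atTop}

/-!
Write `J = ∂I(p)` and `J ⊆ D(0, ρ)`. The repelling fixed point `z₀` lies in `J`, so a small
nontrivial continuum of `J` at `z₀` pulls back under the local inverse of `L` to a continuum
`C ∋ 0` with `L(C) ⊆ J`. By `L(λz) = p(L(z))` and the invariance of `J`, the connected set
`T = ⋃ₘ λᵐC` is unbounded, contains `0`, and `|L| ≤ ρ` on `T`.

Now take `K` with `Mᴷ(L, R) > ρ`, a point `w` with `|Lᴷ(w)| < Mᴷ(L, R)` (nonconstant entire
functions have dense range) and `G_n ∋ w`. The open bounded set `V = Lᴷ(G_n)` has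
`∂V ⊆ Lᴷ(∂G_n) ⊆ A_{Mᴷ(L,R)}(L)`. The connected set `T ∪ D(0, Mᴷ(L, R))` meets `V` and is not
contained in it, so it meets `∂V`; as `|z| ≥ Mᴷ(L, R)` on `∂V`, it does so at some `x ∈ T`, and
then `ρ < Mᴷ⁺¹(L, R) ≤ |L(x)| ≤ ρ`.
-/

open Set Metric Filter Function Bornology

section Topology

variable {X : Type*} [TopologicalSpace X]

theorem IsPreconnected.inter_frontier_nonempty {s t : Set X} (hs : IsPreconnected s)
    (hst : (s ∩ t).Nonempty) (hs_t : (s \ t).Nonempty) : (s ∩ frontier t).Nonempty := by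
  by_contra! h
  have hcover : s ⊆ interior t ∪ (closure t)ᶜ := fun x hx => by
    by_cases hxt : x ∈ closure t
    · exact Or.inl (by_contra fun hxi => h.subset ⟨hx, hxt, hxi⟩)
    · exact Or.inr hxt
  obtain ⟨x, hxs, hxi, hxc⟩ := hs _ _ isOpen_interior isClosed_closure.isOpen_compl hcover
    (hst.mono fun x hx => ⟨hx.1, (hcover hx.1).resolve_right (· (subset_closure hx.2))⟩)
    (hs_t.mono fun x hx => ⟨hx.1, (hcover hx.1).resolve_left (hx.2 <| interior_subset ·)⟩)
  exact hxc (interior_subset_closure hxi)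

theorem IsOpenMap.iterate {f : X → X} (hf : IsOpenMap f) : ∀ n, IsOpenMap f^[n]
  | 0 => IsOpenMap.id
  | n + 1 => (hf.iterate n).comp hf

theorem IsOpenMap.frontier_image_subset {Y : Type*} [TopologicalSpace Y] [T2Space Y] {f : X → Y}
    (hf : Continuous f) (hf' : IsOpenMap f) {G : Set X} (hG : IsOpen G)
    (hGc : IsCompact (closure G)) : frontier (f '' G) ⊆ f '' frontier G := by
  rw [(hf' G hG).frontier_eq, hG.frontier_eq]
  rintro y ⟨hy, hyG⟩
  obtain ⟨x, hx, rfl⟩ := (hGc.image hf).isClosed.closure_subset_iff.2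
    (image_mono subset_closure) hy
  exact ⟨x, ⟨hx, fun hxG => hyG ⟨x, hxG, rfl⟩⟩, rfl⟩

theorem exists_isClopen_mem_subset_of_connectedComponent_subset [T2Space X] [CompactSpace X]
    {x : X} {U : Set X} (hU : IsOpen U) (hxU : connectedComponent x ⊆ U) :
    ∃ Z, IsClopen Z ∧ x ∈ Z ∧ Z ⊆ U := by
  obtain ⟨F, hF⟩ := hU.isClosed_compl.isCompact.elim_finite_subfamily_closed
    (fun Z : {Z : Set X // IsClopen Z ∧ x ∈ Z} => Z.1) (fun Z => Z.2.1.1) (by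
      rw [← connectedComponent_eq_iInter_isClopen]
      exact disjoint_iff_inter_eq_empty.1 (disjoint_compl_left.mono_right hxU))
  refine ⟨⋂ Z ∈ F, Z.1, isClopen_biInter_finset fun Z _ => Z.2.1,
    mem_iInter₂.2 fun Z _ => Z.2.2, fun z hz => by_contra fun hzU => hF.subset ⟨hzU, hz⟩⟩

theorem connectedComponentIn_subset_of_inter_isOpen_eq {J W Z : Set X} (hZ : IsClosed Z)
    (hW : IsOpen W) (hJWZ : J ∩ W = Z) {x : X} (hx : x ∈ Z) : connectedComponentIn J x ⊆ Z := by
  by_contra hsub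
  have hxJ : x ∈ J := (hJWZ ▸ hx).1
  obtain ⟨y, hyC, hyW, hyZ⟩ := isPreconnected_connectedComponentIn (F := J) (x := x) W Zᶜ hW
    hZ.isOpen_compl
    (fun y _ => by_cases (fun hyZ : y ∈ Z => Or.inl (hJWZ ▸ hyZ).2) Or.inr)
    ⟨x, mem_connectedComponentIn hxJ, (hJWZ ▸ hx).2⟩ (not_subset.1 hsub)
  exact hyZ (hJWZ ▸ ⟨connectedComponentIn_subset J x hyC, hyW⟩)

theorem exists_ne_mem_connectedComponentIn_inter_closedBall {X : Type*} [MetricSpace X]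
    [ProperSpace X] {J : Set X} (hJ : IsClosed J) {x : X} (hx : x ∈ J)
    (hnt : connectedComponentIn J x ≠ {x}) {ε : ℝ} (hε : 0 < ε) :
    ∃ y ∈ connectedComponentIn (J ∩ closedBall x ε) x, y ≠ x := by
  obtain ⟨y₀, hy₀, hy₀x⟩ : ∃ y₀ ∈ connectedComponentIn J x, y₀ ≠ x := by
    by_contra! h
    exact hnt (Subset.antisymm h (singleton_subset_iff.2 (mem_connectedComponentIn hx)))
  set δ := min ε (dist y₀ x)
  have hδ : 0 < δ := lt_min hε (dist_pos.2 hy₀x)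
  set K := J ∩ closedBall x δ
  have hxK : x ∈ K := ⟨hx, mem_closedBall_self hδ.le⟩
  have : CompactSpace K := isCompact_iff_compactSpace.1 ((isCompact_closedBall x δ).inter_left hJ)
  by_contra! h
  -- If the component of `x` in the smaller compact set `K` were `{x}`, a clopen piece of `K`
  -- inside `ball x δ` would also be clopen in `J`, and would cut `y₀` off from `x` in `J`.
  have hcc : connectedComponent (⟨x, hxK⟩ : K) ⊆ (↑) ⁻¹' ball x δ := fun z hz => by
    have hzx : (z : X) = x := h z (connectedComponentIn_mono x
      (inter_subset_inter_right J (closedBall_subset_closedBall (min_le_left _ _)))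
      (connectedComponentIn_eq_image hxK ▸ mem_image_of_mem _ hz))
    simpa [hzx] using hδ
  obtain ⟨Z, hZ, hxZ, hZball⟩ :=
    exists_isClopen_mem_subset_of_connectedComponent_subset (isOpen_ball.preimage
      continuous_subtype_val) hcc
  obtain ⟨W, hW, hWZ⟩ := isOpen_induced_iff.1 hZ.isOpen
  have hJWZ : J ∩ (W ∩ ball x δ) = (↑) '' Z := by
    ext w
    constructor
    · rintro ⟨hwJ, hwW, hwb⟩
      exact ⟨⟨w, hwJ, ball_subset_closedBall hwb⟩, hWZ ▸ hwW, rfl⟩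
    · rintro ⟨z, hz, rfl⟩
      exact ⟨z.2.1, (hWZ ▸ hz : z ∈ (↑) ⁻¹' W), hZball hz⟩
  have hy₀Z := connectedComponentIn_subset_of_inter_isOpen_eq
    (hZ.isClosed.isCompact.image continuous_subtype_val).isClosed (hW.inter isOpen_ball) hJWZ
    ⟨_, hxZ, rfl⟩ hy₀
  exact (min_le_right ε _).not_gt (mem_ball.1 (hJWZ ▸ hy₀Z).2.2)

end Topology

theorem Differentiable.isOpenMap_of_deriv_ne_zero {f : ℂ → ℂ} (hf : Differentiable ℂ f) {z : ℂ}
    (hz : _root_.deriv f z ≠ 0) : IsOpenMap f := by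
  refine (AnalyticOnNhd.is_constant_or_isOpenMap fun z _ => hf.analyticAt z).resolve_left ?_
  rintro ⟨w, hw⟩
  exact hz (by simp [show f = fun _ => w from funext hw])

theorem Differentiable.denseRange_of_isOpenMap {f : ℂ → ℂ} (hf : Differentiable ℂ f)
    (hf' : IsOpenMap f) : DenseRange f := by
  rw [Metric.denseRange_iff]
  by_contra! h
  obtain ⟨a, r, hr, har⟩ := h
  have hne : ∀ z, f z - a ≠ 0 := fun z hz => by
    simpa [dist_eq_norm', hz] using (har z).trans_lt' hr
  obtain ⟨c, hc⟩ := (hf.sub_const a).inv hne |>.exists_eq_const_of_bounded <| by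
    rw [isBounded_iff_forall_norm_le]
    refine ⟨r⁻¹, ?_⟩
    rintro _ ⟨z, rfl⟩
    simpa [norm_inv, dist_eq_norm'] using inv_anti₀ hr (har z)
  have hfc : f = fun _ => c⁻¹ + a := funext fun z => by
    have hcz := congrFun hc z
    simp only [Pi.inv_apply, const_apply] at hcz
    rw [← hcz, inv_inv, sub_add_cancel]
  have hopen := hf'.isOpen_range
  rw [hfc, range_const] at hopen
  exact not_isOpen_singleton _ hopen

theorem Differentiable.exists_lt_norm_iterate_of_one_lt_norm_deriv {f : ℂ → ℂ}
    (hf : Differentiable ℂ f) {z₀ : ℂ} (hfix : f z₀ = z₀) (hrep : 1 < ‖_root_.deriv f z₀‖)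
    {ε : ℝ} (hε : 0 < ε) (ρ : ℝ) : ∃ n, ∃ z ∈ ball z₀ ε, ρ < ‖f^[n] z‖ := by
  by_contra! h
  have hz₀ : ‖z₀‖ ≤ ρ := iterate_fixed hfix 0 ▸ h 0 z₀ (mem_ball_self hε)
  -- Cauchy's estimate on `ball z₀ ε` bounds `‖(f^[n])' z₀‖ = ‖f' z₀‖ ^ n` uniformly in `n`.
  have hbound : ∀ n, ‖_root_.deriv f z₀‖ ^ n ≤ (2 * ρ) / ε := fun n => by
    have hmaps : MapsTo f^[n] (ball z₀ ε) (closedBall (f^[n] z₀) (2 * ρ)) := fun z hz => by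
      rw [iterate_fixed hfix, mem_closedBall, dist_eq_norm]
      linarith [norm_sub_le (f^[n] z) z₀, h n z hz]
    have hderiv := (HasDerivAt.iterate z₀ (hf z₀).hasDerivAt hfix n).deriv
    simpa [hderiv] using
      Complex.norm_deriv_le_div_of_mapsTo_ball (hf.iterate n).differentiableOn hmaps hε
  obtain ⟨n, hn⟩ := ((tendsto_pow_atTop_atTop_of_one_lt hrep).eventually_gt_atTop
    ((2 * ρ) / ε)).exists
  exact (hbound n).not_gt hn

theorem HasStrictDerivAt.exists_isPreconnected_mapsTo {f : ℂ → ℂ} {f' x : ℂ}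
    (hf : HasStrictDerivAt f f' x) (hf' : f' ≠ 0) {J : Set ℂ} (hJ : IsClosed J) (hx : f x ∈ J)
    (hnt : connectedComponentIn J (f x) ≠ {f x}) :
    ∃ C : Set ℂ, IsPreconnected C ∧ x ∈ C ∧ (∃ a ∈ C, a ≠ x) ∧ MapsTo f C J := by
  set hF := hf.hasStrictFDerivAt_equiv hf'
  set e := hF.toOpenPartialHomeomorph f with he_def
  have he : ∀ z, e z = f z := fun z => by
    rw [he_def, HasStrictFDerivAt.toOpenPartialHomeomorph_coe]
  have hxe : e.symm (f x) = x := he x ▸ e.left_inv hF.mem_toOpenPartialHomeomorph_source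
  obtain ⟨ε, hε, hεe⟩ := nhds_basis_closedBall.mem_iff.1
    (e.open_target.mem_nhds hF.image_mem_toOpenPartialHomeomorph_target)
  obtain ⟨y, hyQ, hyx⟩ := exists_ne_mem_connectedComponentIn_inter_closedBall hJ hx hnt hε
  set Q := connectedComponentIn (J ∩ closedBall (f x) ε) (f x)
  have hQ : Q ⊆ J ∩ e.target := fun w hw =>
    ⟨(connectedComponentIn_subset _ _ hw).1, hεe (connectedComponentIn_subset _ _ hw).2⟩
  have hfe : ∀ w ∈ Q, f (e.symm w) = w := fun w hw => he _ ▸ e.right_inv (hQ hw).2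
  refine ⟨e.symm '' Q, isPreconnected_connectedComponentIn.image _
    (e.continuousOn_symm.mono fun w hw => (hQ hw).2),
    ⟨f x, mem_connectedComponentIn ⟨hx, mem_closedBall_self hε.le⟩, hxe⟩,
    ⟨e.symm y, mem_image_of_mem _ hyQ, fun h => hyx ?_⟩, ?_⟩
  · rw [← hfe y hyQ, h]
  · rintro _ ⟨w, hw, rfl⟩
    rw [hfe w hw]
    exact (hQ hw).1

section Escaping

variable {p : Polynomial ℂ}

theorem Polynomial.eventually_mul_norm_le_norm_eval (hp : 2 ≤ p.natDegree) (c : ℝ) :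
    ∀ᶠ z in cobounded ℂ, c * ‖z‖ ≤ ‖p.eval z‖ := by
  have hq : 0 < p.divX.degree := by
    rw [← Polynomial.natDegree_pos_iff_degree_pos, Polynomial.natDegree_divX_eq_natDegree_tsub_one]
    omega
  filter_upwards [(p.divX.tendsto_norm_atTop hq tendsto_norm_cobounded_atTop).eventually_ge_atTop
    (c + 1), tendsto_norm_cobounded_atTop.eventually_ge_atTop ‖p.coeff 0‖] with z hqz hz
  have hpz : p.eval z = p.divX.eval z * z + p.coeff 0 := by
    conv_lhs => rw [← p.divX_mul_X_add]
    simp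
  have := norm_sub_norm_le (p.divX.eval z * z) (-p.coeff 0)
  rw [sub_neg_eq_add, ← hpz, norm_neg, norm_mul] at this
  nlinarith [norm_nonneg z]

theorem Polynomial.exists_two_mul_norm_le_norm_eval (hp : 2 ≤ p.natDegree) :
    ∃ ρ > 0, ∀ z : ℂ, ρ ≤ ‖z‖ → 2 * ‖z‖ ≤ ‖p.eval z‖ := by
  obtain ⟨ρ, -, hρ⟩ := hasBasis_cobounded_norm.eventually_iff.1
    (p.eventually_mul_norm_le_norm_eval hp 2)
  exact ⟨max ρ 1, by positivity, fun z hz => hρ ((le_max_left _ _).trans hz)⟩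

theorem eval_mem_escapes_iff {z : ℂ} : p.eval z ∈ escapes p ↔ z ∈ escapes p := by
  simp only [escapes, mem_ofPred_eq, ← iterate_succ_apply]
  exact tendsto_add_atTop_iff_nat (f := fun n => ‖(p.eval ·)^[n] z‖) 1

theorem iterate_mem_escapes_iff {z : ℂ} (n : ℕ) : (p.eval ·)^[n] z ∈ escapes p ↔ z ∈ escapes p := by
  induction n with
  | zero => rfl
  | succ n ih => rw [iterate_succ_apply', eval_mem_escapes_iff, ih]

theorem mem_escapes_of_le_norm {ρ : ℝ} (hρ : 0 < ρ)
    (hgrow : ∀ z : ℂ, ρ ≤ ‖z‖ → 2 * ‖z‖ ≤ ‖p.eval z‖) {z : ℂ} (hz : ρ ≤ ‖z‖) :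
    z ∈ escapes p := by
  have hiter : ∀ n, 2 ^ n * ‖z‖ ≤ ‖(p.eval ·)^[n] z‖ := fun n => by
    induction n with
    | zero => simp
    | succ n ih =>
      rw [iterate_succ_apply', pow_succ]
      have h1 : ‖z‖ ≤ 2 ^ n * ‖z‖ := le_mul_of_one_le_left (norm_nonneg z) (one_le_pow₀ one_le_two)
      nlinarith [hgrow _ (hz.trans (h1.trans ih))]
  exact tendsto_atTop_mono hiter <|
    (tendsto_pow_atTop_atTop_of_one_lt one_lt_two).atTop_mul_const (hρ.trans_le hz)

theorem frontier_escapes_subset_closedBall {ρ : ℝ} (hρ : 0 < ρ)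
    (hgrow : ∀ z : ℂ, ρ ≤ ‖z‖ → 2 * ‖z‖ ≤ ‖p.eval z‖) :
    frontier (escapes p) ⊆ closedBall 0 ρ := fun z hz => by
  by_contra hzρ
  have hint : {w : ℂ | ρ < ‖w‖} ⊆ interior (escapes p) :=
    interior_maximal (fun w hw => mem_escapes_of_le_norm hρ hgrow (le_of_lt hw))
      (isOpen_lt continuous_const continuous_norm)
  exact hz.2 (hint (by simpa using hzρ))

theorem mapsTo_frontier_escapes :
    MapsTo (p.eval ·) (frontier (escapes p)) (frontier (escapes p)) := by
  have h := p.continuous.frontier_preimage_subset (escapes p)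
  rwa [show (p.eval ·) ⁻¹' escapes p = escapes p from ext fun _ => eval_mem_escapes_iff] at h

theorem mem_frontier_escapes_of_repelling (hp : 2 ≤ p.natDegree) {z₀ : ℂ} (hfix : p.eval z₀ = z₀)
    (hrep : 1 < ‖p.derivative.eval z₀‖) : z₀ ∈ frontier (escapes p) := by
  obtain ⟨ρ, hρ, hgrow⟩ := p.exists_two_mul_norm_le_norm_eval hp
  have hz₀ : z₀ ∉ escapes p := fun h => by
    simpa [escapes, iterate_fixed (f := (p.eval ·)) hfix] using h.eventually_gt_atTop ‖z₀‖ |>.exists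
  refine ⟨Metric.mem_closure_iff.2 fun ε hε => ?_, fun h => hz₀ (interior_subset h)⟩
  obtain ⟨n, z, hz, hρz⟩ := p.differentiable.exists_lt_norm_iterate_of_one_lt_norm_deriv hfix
    (by rwa [Polynomial.deriv]) hε ρ
  exact ⟨z, (iterate_mem_escapes_iff n).1 (mem_escapes_of_le_norm hρ hgrow hρz.le),
    mem_ball'.1 hz⟩

end Escaping

section MaxMod

variable {L : ℂ → ℂ}

theorem maxMod_nonneg (L : ℂ → ℂ) (r : ℝ) : 0 ≤ maxMod L r :=
  Real.sSup_nonneg (by rintro _ ⟨z, -, rfl⟩; exact norm_nonneg _)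

theorem lowerSemicontinuousAt_maxMod (hL : Continuous L) {r : ℝ} (hr : 0 < r) :
    LowerSemicontinuousAt (maxMod L) r := by
  intro y hy
  obtain ⟨_, ⟨u, hu, rfl⟩, hyu⟩ :=
    exists_lt_of_lt_csSup ((NormedSpace.sphere_nonempty.2 hr.le).image _) hy
  rw [mem_sphere_zero_iff_norm] at hu
  -- Compare with the continuous minorant `s ↦ ‖L ((s / r) * u)‖` of `maxMod L` near `r`.
  have hcont : Continuous fun s : ℝ => ‖L (((s / r : ℝ) : ℂ) * u)‖ := by fun_prop
  have hval : y < ‖L (((r / r : ℝ) : ℂ) * u)‖ := by simpa [hr.ne'] using hyu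
  filter_upwards [(hcont.tendsto r).eventually (lt_mem_nhds hval),
    lt_mem_nhds hr] with s hs hs0
  refine hs.trans_le (le_csSup ((isCompact_sphere 0 s).image (by fun_prop)).bddAbove
    ⟨_, ?_, rfl⟩)
  rw [mem_sphere_zero_iff_norm, norm_mul, Complex.norm_real, Real.norm_eq_abs, hu,
    abs_of_pos (div_pos hs0 hr), div_mul_cancel₀ _ hr.ne']

theorem tendsto_iterate_atTop_of_lt_apply {f : ℝ → ℝ} {R : ℝ} (hf : ∀ x, R ≤ x → x < f x)
    (hlsc : ∀ x, f R < x → LowerSemicontinuousAt f x) :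
    Tendsto (fun k => f^[k] R) atTop atTop := by
  have hR : ∀ k, R ≤ f^[k] R := fun k => by
    induction k with
    | zero => rfl
    | succ k ih => rw [iterate_succ_apply']; exact ih.trans (hf _ ih).le
  have hmono : Monotone fun k => f^[k] R := monotone_nat_of_le_succ fun k => by
    rw [iterate_succ_apply']; exact (hf _ (hR k)).le
  refine tendsto_atTop_atTop_of_monotone' hmono fun hbdd => ?_
  set c := ⨆ k, f^[k] R
  have hle : ∀ k, f^[k] R ≤ c := le_ciSup hbdd
  have hRc : f R < c := (hf _ (hR 1)).trans_le (hle 2)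
  -- The orbit converges to `c`, yet lower semicontinuity at `c < f c` pushes it above `c`.
  obtain ⟨k, hk⟩ := ((tendsto_atTop_ciSup hmono hbdd).eventually
    (hlsc c hRc c (hf c ((hR 0).trans (hle 0))))).exists
  exact hk.not_ge (iterate_succ_apply' f k R ▸ hle (k + 1))

theorem tendsto_maxMod_iterate_atTop (hL : Continuous L) {R : ℝ}
    (hR : ∀ r, R ≤ r → r < maxMod L r) : Tendsto (fun k => (maxMod L)^[k] R) atTop atTop :=
  tendsto_iterate_atTop_of_lt_apply hR fun _ hx =>
    lowerSemicontinuousAt_maxMod hL ((maxMod_nonneg L R).trans_lt hx)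

/-- The set `A_R(L)` of the paper. -/
def fastEscapingLevelSet (L : ℂ → ℂ) (R : ℝ) : Set ℂ :=
  {z | ∀ k : ℕ, (maxMod L)^[k] R ≤ ‖L^[k] z‖}

theorem mapsTo_iterate_fastEscapingLevelSet (K : ℕ) (R : ℝ) :
    MapsTo L^[K] (fastEscapingLevelSet L R) (fastEscapingLevelSet L ((maxMod L)^[K] R)) :=
  fun z hz k => by simpa only [← iterate_add_apply] using hz (k + K)

end MaxMod

theorem exists_unbounded_isPreconnected_mapsTo_of_semiconj {L g : ℂ → ℂ} {lam : ℂ}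
    (hlam : 1 < ‖lam‖) (hsemi : Semiconj L (lam * ·) g) {J : Set ℂ} (hg : MapsTo g J J)
    {C : Set ℂ} (hC : IsPreconnected C) (hC0 : 0 ∈ C) {a : ℂ} (ha : a ∈ C) (ha0 : a ≠ 0)
    (hCJ : MapsTo L C J) :
    ∃ T : Set ℂ, IsPreconnected T ∧ 0 ∈ T ∧ ¬IsBounded T ∧ MapsTo L T J := by
  refine ⟨⋃ m : ℕ, (lam ^ m * ·) '' C,
    isPreconnected_iUnion ⟨0, mem_iInter.2 fun m => ⟨0, hC0, mul_zero _⟩⟩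
      fun m => hC.image _ (continuous_const_mul _).continuousOn,
    mem_iUnion.2 ⟨0, 0, hC0, mul_zero _⟩, fun hT => ?_, ?_⟩
  · obtain ⟨b, hb⟩ := isBounded_iff_forall_norm_le.1 hT
    obtain ⟨m, hm⟩ := ((tendsto_pow_atTop_atTop_of_one_lt hlam).atTop_mul_const
      (norm_pos_iff.2 ha0)).eventually_gt_atTop b |>.exists
    have := hb _ (mem_iUnion.2 ⟨m, a, ha, rfl⟩)
    rw [norm_mul, norm_pow] at this
    exact this.not_gt hm
  · simp only [MapsTo, mem_iUnion]
    rintro _ ⟨m, z, hz, rfl⟩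
    have h := hsemi.iterate_right m z
    rw [mul_left_iterate] at h
    exact h ▸ hg.iterate m (hCJ hz)

theorem IsPreconnected.inter_fastEscapingLevelSet_nonempty {L : ℂ → ℂ} (hL : Continuous L)
    {K : ℕ} (hK : IsOpenMap L^[K]) {R : ℝ} {G : Set ℂ} (hGo : IsOpen G) (hGb : IsBounded G)
    (hGA : frontier G ⊆ fastEscapingLevelSet L R) {w : ℂ} (hw : w ∈ G)
    (hwK : ‖L^[K] w‖ < (maxMod L)^[K] R) {T : Set ℂ} (hT : IsPreconnected T) (hT0 : 0 ∈ T)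
    (hTb : ¬IsBounded T) : (T ∩ fastEscapingLevelSet L ((maxMod L)^[K] R)).Nonempty := by
  set r := (maxMod L)^[K] R
  have hfr : frontier (L^[K] '' G) ⊆ fastEscapingLevelSet L r :=
    (hK.frontier_image_subset (hL.iterate K) hGo hGb.isCompact_closure).trans
      (image_subset_iff.2 ((mapsTo_iterate_fastEscapingLevelSet K R).mono_left hGA))
  have hVb : IsBounded (L^[K] '' G) :=
    (hGb.isCompact_closure.image (hL.iterate K)).isBounded.subset (image_mono subset_closure)
  have hTB : IsPreconnected (T ∪ ball 0 r) :=
    hT.union 0 hT0 (mem_ball_self ((norm_nonneg _).trans_lt hwK)) (convex_ball 0 r).isPreconnected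
  obtain ⟨t, htT, htV⟩ := not_subset.1 fun h => hTb (hVb.subset h)
  obtain ⟨x, hxT | hxB, hxV⟩ := hTB.inter_frontier_nonempty
    ⟨L^[K] w, Or.inr (mem_ball_zero_iff.2 hwK), mem_image_of_mem _ hw⟩ ⟨t, Or.inl htT, htV⟩
  · exact ⟨x, hxT, hfr hxV⟩
  · exact absurd (hfr hxV 0) (mem_ball_zero_iff.1 hxB).not_ge

theorem no_spiders_web_if_julia_component_nontrivial (p : Polynomial ℂ) (d : ℕ)
    (hd : 2 ≤ d) (hdeg : p.natDegree = d) (z₀ lam : ℂ) (hfix : p.eval z₀ = z₀)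
    (hlam : lam = (Polynomial.derivative p).eval z₀) (hrep : 1 < ‖lam‖)
    (L : ℂ → ℂ) (hL : Differentiable ℂ L) (hL0 : L 0 = z₀) (hL' : deriv L 0 ≠ 0)
    (hLeq : ∀ z : ℂ, p.eval (L z) = L (lam * z))
    (hJ : connectedComponentIn (frontier (escapes p)) z₀ ≠ {z₀})
    (R : ℝ) (hR : ∀ r : ℝ, R ≤ r → r < maxMod L r) :
    ¬ ∃ G : ℕ → Set ℂ,
        (∀ n, IsOpen (G n)) ∧ (∀ n, Bornology.IsBounded (G n)) ∧
        (∀ n, IsConnected (G n)) ∧ (∀ n, SimplyConnectedSpace (G n)) ∧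
        (∀ n, (0:ℂ) ∈ G n) ∧ (∀ n, G n ⊆ G (n + 1)) ∧ (⋃ n, G n) = Set.univ ∧
        (∀ n, frontier (G n) ⊆
          {z : ℂ | ∀ k : ℕ, (fun s => maxMod L s)^[k] R ≤ ‖L^[k] z‖}) := by
  rintro ⟨G, hGo, hGb, -, -, -, -, hGU, hGA⟩
  subst hdeg hlam hL0
  obtain ⟨ρ, hρ, hgrow⟩ := p.exists_two_mul_norm_le_norm_eval hd
  have hJρ := frontier_escapes_subset_closedBall hρ hgrow
  obtain ⟨C, hC, hC0, ⟨a, ha, ha0⟩, hCJ⟩ := (hL.analyticAt 0).hasStrictDerivAt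
    |>.exists_isPreconnected_mapsTo hL' isClosed_frontier
      (mem_frontier_escapes_of_repelling hd hfix hrep) hJ
  obtain ⟨T, hT, hT0, hTb, hTJ⟩ := exists_unbounded_isPreconnected_mapsTo_of_semiconj hrep
    (fun z => (hLeq z).symm) mapsTo_frontier_escapes hC hC0 ha ha0 hCJ
  have hM := tendsto_maxMod_iterate_atTop hL.continuous hR
  obtain ⟨K, hK, hK'⟩ := ((hM.eventually_gt_atTop ρ).and
    (((tendsto_add_atTop_iff_nat 1).2 hM).eventually_gt_atTop ρ)).exists
  have hKopen := (hL.isOpenMap_of_deriv_ne_zero hL').iterate K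
  obtain ⟨w, hw⟩ := ((hL.iterate K).denseRange_of_isOpenMap hKopen).exists_dist_lt 0 (hρ.trans hK)
  obtain ⟨n, hwn⟩ := mem_iUnion.1 (hGU ▸ mem_univ w)
  obtain ⟨x, hxT, hxA⟩ := hT.inter_fastEscapingLevelSet_nonempty hL.continuous hKopen (hGo n)
    (hGb n) (hGA n) hwn (by simpa using hw) hT0 hTb
  have hLx : ‖L x‖ ≤ ρ := mem_closedBall_zero_iff.1 (hJρ (hTJ hxT))
  rw [iterate_succ_apply'] at hK'
  exact (hK'.trans_le (hxA 1)).not_ge hLx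
end
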